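/- Let β > 0, λ > 0, and γ ≥ 0. Then (1/β)·∫ y·(1−e^{−γy}) dμ̂(y) = γ·G(γ). -/

import Mathlib

open Real MeasureTheory

/-! Integrating against `muhat β λ` means evaluating at the atom `β` and integrating against the
density `βλ²e^{-λx}` over `(0, β)`. For `f y = y (1 - e^{-γy})` the density part becomes
`βλ² ∫₀^β x (e^{-λx} - e^{-(λ+γ)x}) dx`, and `∫₀^β x e^{-ax} dx = (1 - (1 + aβ) e^{-aβ}) / a²`,
so the identity reduces to algebra in `e^{-λβ}` and `e^{-γβ}`. -/

/-- The measure `μ̂` on `ℝ`: the point mass `(λβ+1)e^{−λβ}` at `β` plus the measure with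
density `x ↦ βλ²e^{−λx}` on `(0,β)` with respect to Lebesgue measure. -/
noncomputable def muhat (β lam : ℝ) : Measure ℝ :=
  (ENNReal.ofReal ((lam * β + 1) * exp (-(lam * β)))) • Measure.dirac β
    + (volume.restrict (Set.Ioo 0 β)).withDensity
        (fun x => ENNReal.ofReal (β * lam ^ 2 * exp (-(lam * x))))

theorem integral_mul_exp_neg_mul {a : ℝ} (ha : a ≠ 0) (b : ℝ) :
    ∫ x in (0 : ℝ)..b, x * exp (-(a * x)) = (1 - (1 + a * b) * exp (-(a * b))) / a ^ 2 := by
  have hderiv : ∀ x, HasDerivAt (fun t => -((a * t + 1) * exp (-(a * t))) / a ^ 2)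
      (x * exp (-(a * x))) x := by
    intro x
    have hlin := (hasDerivAt_id' x).const_mul a
    refine ((hlin.add_const 1).mul hlin.fun_neg.exp).fun_neg.div_const (a ^ 2) |>.congr_deriv ?_
    field_simp
    ring
  rw [intervalIntegral.integral_eq_sub_of_hasDerivAt (fun x _ => hderiv x)
    ((by fun_prop : Continuous fun x => x * exp (-(a * x))).intervalIntegrable _ _)]
  simp only [mul_zero, zero_add, neg_zero, exp_zero, mul_one]
  ring

section withDensity

variable {a b : ℝ} {d : ℝ → ℝ}

theorem integrable_withDensity_ofReal_Ioo (hd : Continuous d) {f : ℝ → ℝ} (hf : Continuous f) :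
    Integrable f ((volume.restrict (Set.Ioo a b)).withDensity fun x => ENNReal.ofReal (d x)) := by
  rw [integrable_withDensity_iff_integrable_smul' (by fun_prop) (by simp)]
  simp only [ENNReal.toReal_ofReal']
  exact (Continuous.integrableOn_Icc (by fun_prop)).mono_set Set.Ioo_subset_Icc_self

theorem integral_withDensity_ofReal_Ioo (hab : a ≤ b) (hd : Measurable d) (hd_nonneg : ∀ x, 0 ≤ d x)
    (f : ℝ → ℝ) :
    ∫ x, f x ∂(volume.restrict (Set.Ioo a b)).withDensity (fun x => ENNReal.ofReal (d x))
      = ∫ x in a..b, d x * f x := by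
  rw [integral_withDensity_eq_integral_toReal_smul (by fun_prop) (by simp),
    intervalIntegral.integral_of_le hab, integral_Ioc_eq_integral_Ioo]
  simp [ENNReal.toReal_ofReal (hd_nonneg _)]

end withDensity

theorem integral_muhat {β lam : ℝ} (hβ : 0 ≤ β) (hlam : 0 ≤ lam) {f : ℝ → ℝ}
    (hf : Continuous f) :
    ∫ y, f y ∂muhat β lam
      = (lam * β + 1) * exp (-(lam * β)) * f β
        + ∫ x in (0 : ℝ)..β, β * lam ^ 2 * exp (-(lam * x)) * f x := by
  have hdens : Continuous fun x => β * lam ^ 2 * exp (-(lam * x)) := by fun_prop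
  rw [muhat, integral_add_measure ((integrable_dirac (by simp)).smul_measure ENNReal.ofReal_ne_top)
      (integrable_withDensity_ofReal_Ioo hdens hf),
    integral_smul_measure, integral_dirac, ENNReal.toReal_ofReal (by positivity),
    integral_withDensity_ofReal_Ioo hβ hdens.measurable (fun _ => by positivity), smul_eq_mul]

/-- For `β > 0`, `λ > 0` and `γ ≥ 0`, `(1/β)·∫ y·(1−e^{−γy}) dμ̂(y) = γ·G(γ)`. -/
theorem stmt_8 (β lam γ : ℝ) (hβ : 0 < β) (hlam : 0 < lam) (hγ : 0 ≤ γ)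
    (G : ℝ → ℝ)
    (hG : ∀ g : ℝ, G g = (2 * lam + g) / (lam + g) ^ 2 * (1 - exp (-((lam + g) * β)))
      - lam * β / (lam + g) * exp (-((lam + g) * β))) :
    (1 / β) * ∫ y, y * (1 - exp (-(γ * y))) ∂(muhat β lam) = γ * G γ := by
  have hexp : ∀ x, exp (-((lam + γ) * x)) = exp (-(lam * x)) * exp (-(γ * x)) := fun x => by
    rw [← exp_add]; ring_nf
  have hsplit : ∀ x, β * lam ^ 2 * exp (-(lam * x)) * (x * (1 - exp (-(γ * x))))
      = β * lam ^ 2 * (x * exp (-(lam * x))) - β * lam ^ 2 * (x * exp (-((lam + γ) * x))) :=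
    fun x => by rw [hexp]; ring
  have hlamγ : lam + γ ≠ 0 := by positivity
  rw [integral_muhat hβ.le hlam.le (by fun_prop),
    intervalIntegral.integral_congr fun x _ => hsplit x,
    intervalIntegral.integral_sub ((by fun_prop : Continuous _).intervalIntegrable _ _)
      ((by fun_prop : Continuous _).intervalIntegrable _ _),
    intervalIntegral.integral_const_mul, intervalIntegral.integral_const_mul,
    integral_mul_exp_neg_mul hlam.ne', integral_mul_exp_neg_mul hlamγ, hG, hexp]
  field_simp
  ring
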